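/- For every candidate trajectory x, J(x*) ≤ J(x); that is, the Gluskabi raccordation x* built from the two-level control u₀ minimizes the persistence cost J(x) = ∫_a^{b+τ} (x(t) − x(t−τ))² dt over all measurable functions agreeing with x^a on (−∞, a] and with x^b on [b, ∞), for a raccordation interval [a, b] of arbitrary length. (Theorem 2 of the paper.) -/

import Mathlib

/-!
Cut `(a, b + τ]` into the fibres `s + kτ`, `s ∈ (a, a + τ)`; past `b + τ` the integrand vanishes
by periodicity of `xb`, so the fibres may run up to `k = n + 1`. Along a fibre a candidate `x`
gives the sequence `vⱼ = x (s - τ + jτ)`, which starts at `xa s` and, from the first index `m`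
with `s - τ + mτ ≥ b` on, equals `xb s`; the cost of the fibre is `∑ (vₖ₊₁ - vₖ)²`. By
Cauchy–Schwarz this is at least `(xb s - xa s)² / m`, attained by equal increments
`(xb s - xa s) / m`, which is what `u₀` prescribes: `m` is `n + 2` or `n + 1` according to the
position of `s` in the period. Integrating over `s` gives the theorem.
-/

open MeasureTheory Set
open scoped ENNReal

noncomputable def persistenceIntegrand (τ : ℝ) (y : ℝ → ℝ) (t : ℝ) : ℝ≥0∞ :=
  ENNReal.ofReal ((y t - y (t - τ)) ^ 2)

noncomputable def persistenceCost (τ a c : ℝ) (y : ℝ → ℝ) : ℝ≥0∞ :=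
  ∫⁻ t in Ioc a c, persistenceIntegrand τ y t

lemma measurable_persistenceIntegrand {τ : ℝ} {y : ℝ → ℝ} (hy : Measurable y) :
    Measurable (persistenceIntegrand τ y) := by
  unfold persistenceIntegrand
  fun_prop

lemma sum_lintegral_le_lintegral_sum {α ι : Type*} [MeasurableSpace α] {μ : Measure α}
    (s : Finset ι) (f : ι → α → ℝ≥0∞) :
    ∑ i ∈ s, ∫⁻ x, f i x ∂μ ≤ ∫⁻ x, ∑ i ∈ s, f i x ∂μ := by
  classical
  induction s using Finset.induction_on with
  | empty => simp
  | insert i s hi ih =>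
    simp only [Finset.sum_insert hi]
    exact (add_le_add_right ih _).trans (le_lintegral_add _ _)

lemma setLIntegral_Ioc_eq_of_eqOn_zero {μ : Measure ℝ} {g : ℝ → ℝ≥0∞} {a c d : ℝ}
    (hac : a ≤ c) (hcd : c ≤ d) (hg : EqOn g 0 (Ioc c d)) :
    ∫⁻ t in Ioc a d, g t ∂μ = ∫⁻ t in Ioc a c, g t ∂μ := by
  rw [← Ioc_union_Ioc_eq_Ioc hac hcd,
    lintegral_union measurableSet_Ioc (Ioc_disjoint_Ioc_of_le le_rfl),
    setLIntegral_eq_zero measurableSet_Ioc hg, add_zero]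

lemma setLIntegral_Ioc_comp_add_right (g : ℝ → ℝ≥0∞) (c d e : ℝ) :
    ∫⁻ s in Ioc d e, g (s + c) = ∫⁻ t in Ioc (d + c) (e + c), g t := by
  rw [(measurePreserving_add_right volume c).setLIntegral_comp_emb
    (MeasurableEquiv.addRight c).measurableEmbedding g (Ioc d e)]
  simp

lemma setLIntegral_Ioc_eq_sum_shift (g : ℝ → ℝ≥0∞) {τ : ℝ} (hτ : 0 ≤ τ) (a : ℝ) (K : ℕ) :
    ∫⁻ t in Ioc a (a + K * τ), g t =
      ∑ k ∈ Finset.range K, ∫⁻ s in Ioc a (a + τ), g (s + k * τ) := by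
  induction K with
  | zero => simp
  | succ K ih =>
    have hK : a ≤ a + K * τ := le_add_of_nonneg_right (by positivity)
    have hstep : a + K * τ ≤ a + (K + 1 : ℕ) * τ := by push_cast; linarith
    rw [Finset.sum_range_succ, ← ih, setLIntegral_Ioc_comp_add_right,
      ← Ioc_union_Ioc_eq_Ioc hK hstep,
      lintegral_union measurableSet_Ioc (Ioc_disjoint_Ioc_of_le le_rfl),
      show a + τ + K * τ = a + (K + 1 : ℕ) * τ by push_cast; ring]

lemma sum_range_sq_sub_le_of_affine {v w : ℕ → ℝ} {m K : ℕ} {d : ℝ} (hmK : m ≤ K)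
    (hw : ∀ j ≤ m, w j = w 0 + j * d) (hw_const : ∀ k, m ≤ k → w (k + 1) = w k)
    (h0 : v 0 = w 0) (hm : v m = w m) :
    ∑ k ∈ Finset.range K, (w (k + 1) - w k) ^ 2 ≤
      ∑ k ∈ Finset.range K, (v (k + 1) - v k) ^ 2 := by
  have hw_tail : ∑ k ∈ Finset.Ico m K, (w (k + 1) - w k) ^ 2 = 0 :=
    Finset.sum_eq_zero fun k hk => by simp [hw_const k (Finset.mem_Ico.1 hk).1]
  have hw_head : ∑ k ∈ Finset.range m, (w (k + 1) - w k) ^ 2 = m * d ^ 2 := by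
    rw [Finset.sum_congr rfl fun k hk => ?_, Finset.sum_const, Finset.card_range, nsmul_eq_mul]
    have hk := Finset.mem_range.1 hk
    rw [hw (k + 1) hk, hw k hk.le]
    push_cast
    ring
  have hcs : (m * d) ^ 2 ≤ m * ∑ k ∈ Finset.range m, (v (k + 1) - v k) ^ 2 := by
    have := sq_sum_le_card_mul_sum_sq (s := Finset.range m) (f := fun k => v (k + 1) - v k)
    rwa [Finset.sum_range_sub, Finset.card_range, hm, h0, hw m le_rfl, add_sub_cancel_left]
      at this
  have hv_tail : 0 ≤ ∑ k ∈ Finset.Ico m K, (v (k + 1) - v k) ^ 2 :=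
    Finset.sum_nonneg fun _ _ => sq_nonneg _
  rw [← Finset.sum_range_add_sum_Ico _ hmK, ← Finset.sum_range_add_sum_Ico _ hmK, hw_tail,
    hw_head]
  rcases m.eq_zero_or_pos with rfl | hm0
  · simpa using hv_tail
  · have hm0' : (0 : ℝ) < m := by exact_mod_cast hm0
    have : m * d ^ 2 ≤ ∑ k ∈ Finset.range m, (v (k + 1) - v k) ^ 2 :=
      le_of_mul_le_mul_left (by nlinarith) hm0'
    linarith

lemma Function.Periodic.sub_add_natCast_mul {α β : Type*} [Ring α] {f : α → β} {c : α}
    (h : Function.Periodic f c) (s : α) (j : ℕ) : f (s - c + j * c) = f s := by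
  rw [h.nat_mul j (s - c), h.sub_eq]

lemma periodic_of_eq_ite_sub_mul_floor {τ a c p q : ℝ} (hτ : τ ≠ 0) {xa xb u : ℝ → ℝ}
    (hxa : Function.Periodic xa τ) (hxb : Function.Periodic xb τ)
    (hu : ∀ t, u t = if (t - a) - τ * (⌊(t - a) / τ⌋ : ℝ) < c then (xb t - xa t) / p
      else (xb t - xa t) / q) :
    Function.Periodic u τ := by
  intro t
  have hfloor : ⌊(t + τ - a) / τ⌋ = ⌊(t - a) / τ⌋ + 1 := by
    rw [show (t + τ - a) / τ = (t - a) / τ + (1 : ℤ) by field_simp; push_cast; ring,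
      Int.floor_add_intCast]
  rw [hu, hu, hfloor, hxa, hxb, Int.cast_add, Int.cast_one,
    show t + τ - a - τ * ((⌊(t - a) / τ⌋ : ℝ) + 1) = t - a - τ * ⌊(t - a) / τ⌋ by ring]

lemma floor_sub_div_eq_zero {τ a s : ℝ} (hτ : 0 < τ) (hs : s ∈ Ioo a (a + τ)) :
    ⌊(s - a) / τ⌋ = 0 :=
  Int.floor_eq_zero_iff.2
    ⟨div_nonneg (by linarith [hs.1]) hτ.le, (div_lt_one hτ).2 (by linarith [hs.2])⟩

lemma exists_fiber_length {τ a b s : ℝ} {n : ℕ} {xa xb u₀ : ℝ → ℝ} (hτ : 0 < τ)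
    (hlo : n * τ ≤ b - a) (hhi : b - a < (n + 1) * τ)
    (hu₀ : ∀ t, u₀ t = if (t - a) - τ * (⌊(t - a) / τ⌋ : ℝ) < b - a - n * τ then
      (xb t - xa t) / ((n : ℝ) + 2) else (xb t - xa t) / ((n : ℝ) + 1))
    (hs : s ∈ Ioo a (a + τ)) :
    ∃ m : ℕ, m ≤ n + 2 ∧ b ≤ s - τ + m * τ ∧ s - τ + m * τ < b + τ ∧
      m * u₀ s = xb s - xa s := by
  rw [hu₀, floor_sub_div_eq_zero hτ hs, Int.cast_zero, mul_zero, sub_zero]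
  by_cases h : s - a < b - a - n * τ
  · refine ⟨n + 2, le_rfl, ?_, ?_, ?_⟩
    · push_cast
      linarith [hs.1]
    · push_cast
      linarith
    · rw [if_pos h]
      push_cast
      field_simp
  · refine ⟨n + 1, by omega, ?_, ?_, ?_⟩
    · push_cast
      linarith
    · push_cast
      linarith [hs.2]
    · rw [if_neg h]
      push_cast
      field_simp

lemma xstar_fiber_eq {τ a b s : ℝ} {m : ℕ} {xa xb u₀ xstar : ℝ → ℝ} (hτ : 0 < τ)
    (hxa_per : Function.Periodic xa τ) (hxb_per : Function.Periodic xb τ)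
    (hu₀_per : Function.Periodic u₀ τ)
    (hxstar_a : ∀ t, t ≤ a → xstar t = xa t)
    (hxstar_mid : ∀ t, a < t → t < b → xstar t = xa t + (1 + (⌊(t - a) / τ⌋ : ℝ)) * u₀ t)
    (hxstar_b : ∀ t, b ≤ t → xstar t = xb t)
    (hs : s ∈ Ioo a (a + τ)) (hm_ge : b ≤ s - τ + m * τ) (hm_lt : s - τ + m * τ < b + τ)
    (hmu : m * u₀ s = xb s - xa s) (j : ℕ) (hj : j ≤ m) :
    xstar (s - τ + j * τ) = xa s + j * u₀ s := by
  rcases hj.eq_or_lt with rfl | hjm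
  · rw [hxstar_b _ hm_ge, hxb_per.sub_add_natCast_mul, hmu]
    ring
  rcases j.eq_zero_or_pos with rfl | hj0
  · rw [Nat.cast_zero, zero_mul, add_zero, zero_mul, add_zero, hxstar_a _ (by linarith [hs.2]),
      hxa_per.sub_eq]
  have hj1 : (1 : ℝ) ≤ j := by exact_mod_cast hj0
  have hjm' : (j : ℝ) + 1 ≤ m := by exact_mod_cast hjm
  have hfloor : ⌊(s - τ + j * τ - a) / τ⌋ = (j - 1 : ℤ) := by
    rw [show (s - τ + j * τ - a) / τ = (s - a) / τ + ((j - 1 : ℤ) : ℝ) by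
        field_simp; push_cast; ring,
      Int.floor_add_intCast, floor_sub_div_eq_zero hτ hs, zero_add]
  rw [hxstar_mid _ (by nlinarith [hs.1]) (by nlinarith), hfloor, hxa_per.sub_add_natCast_mul,
    hu₀_per.sub_add_natCast_mul]
  push_cast
  ring

lemma sum_range_persistenceIntegrand_eq (τ s : ℝ) (y : ℝ → ℝ) (v : ℕ → ℝ)
    (hv : ∀ j, v j = y (s - τ + j * τ)) (K : ℕ) :
    ∑ k ∈ Finset.range K, persistenceIntegrand τ y (s + k * τ) =
      ENNReal.ofReal (∑ k ∈ Finset.range K, (v (k + 1) - v k) ^ 2) := by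
  rw [ENNReal.ofReal_sum_of_nonneg fun _ _ => sq_nonneg _]
  refine Finset.sum_congr rfl fun k _ => ?_
  rw [persistenceIntegrand, hv, hv,
    show s - τ + (k + 1 : ℕ) * τ = s + k * τ by push_cast; ring,
    show s - τ + k * τ = s + k * τ - τ by ring]

lemma sum_persistenceIntegrand_fiber_le {τ a b s : ℝ} {n : ℕ} {xa xb u₀ xstar x : ℝ → ℝ}
    (hτ : 0 < τ) (hlo : n * τ ≤ b - a) (hhi : b - a < (n + 1) * τ)
    (hxa_per : Function.Periodic xa τ) (hxb_per : Function.Periodic xb τ)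
    (hu₀ : ∀ t, u₀ t = if (t - a) - τ * (⌊(t - a) / τ⌋ : ℝ) < b - a - n * τ then
      (xb t - xa t) / ((n : ℝ) + 2) else (xb t - xa t) / ((n : ℝ) + 1))
    (hxstar_a : ∀ t, t ≤ a → xstar t = xa t)
    (hxstar_mid : ∀ t, a < t → t < b → xstar t = xa t + (1 + (⌊(t - a) / τ⌋ : ℝ)) * u₀ t)
    (hxstar_b : ∀ t, b ≤ t → xstar t = xb t)
    (hx_a : ∀ t, t ≤ a → x t = xa t) (hx_b : ∀ t, b ≤ t → x t = xb t)
    (hs : s ∈ Ioo a (a + τ)) :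
    ∑ k ∈ Finset.range (n + 2), persistenceIntegrand τ xstar (s + k * τ) ≤
      ∑ k ∈ Finset.range (n + 2), persistenceIntegrand τ x (s + k * τ) := by
  obtain ⟨m, hmK, hm_ge, hm_lt, hmu⟩ := exists_fiber_length hτ hlo hhi hu₀ hs
  have hw := xstar_fiber_eq hτ hxa_per hxb_per
    (periodic_of_eq_ite_sub_mul_floor hτ.ne' hxa_per hxb_per hu₀)
    hxstar_a hxstar_mid hxstar_b hs hm_ge hm_lt hmu
  have hs_le : s - τ ≤ a := by linarith [hs.2]
  rw [sum_range_persistenceIntegrand_eq τ s xstar (fun j => xstar (s - τ + j * τ))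
      fun _ => rfl,
    sum_range_persistenceIntegrand_eq τ s x (fun j => x (s - τ + j * τ)) fun _ => rfl]
  refine ENNReal.ofReal_le_ofReal
    (sum_range_sq_sub_le_of_affine (w := fun j => xstar (s - τ + j * τ))
      (v := fun j => x (s - τ + j * τ)) (d := u₀ s) hmK
      (fun j hj => ?_) (fun k hk => ?_) ?_ ?_)
  · rw [hw j hj, hw 0 (Nat.zero_le _)]
    simp
  · have hbk : b ≤ s - τ + k * τ := by
      have : (m : ℝ) ≤ k := by exact_mod_cast hk
      nlinarith
    rw [show s - τ + (k + 1 : ℕ) * τ = s - τ + k * τ + τ by push_cast; ring,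
      hxstar_b _ hbk, hxstar_b _ (by linarith), hxb_per]
  · simp only [Nat.cast_zero, zero_mul, add_zero]
    rw [hx_a _ hs_le, hxstar_a _ hs_le]
  · rw [hx_b _ hm_ge, hxstar_b _ hm_ge]

lemma persistenceCost_eq_sum_fibers {τ a b : ℝ} (hτ : 0 ≤ τ) (hab : a ≤ b) {K : ℕ}
    (hK : b + τ ≤ a + K * τ) {y p : ℝ → ℝ} (hp : Function.Periodic p τ)
    (hy : ∀ t, b ≤ t → y t = p t) :
    persistenceCost τ a (b + τ) y =
      ∑ k ∈ Finset.range K, ∫⁻ s in Ioc a (a + τ), persistenceIntegrand τ y (s + k * τ) := by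
  rw [persistenceCost, ← setLIntegral_Ioc_eq_sum_shift _ hτ,
    setLIntegral_Ioc_eq_of_eqOn_zero (by linarith) hK]
  intro t ht
  have ht' : b ≤ t - τ := by linarith [ht.1]
  simp [persistenceIntegrand, hy t (by linarith), hy _ ht', hp.sub_eq]

theorem gluskabi_raccordation_general_minimizes_general
    (τ a b : ℝ) (hτ : 0 < τ) (hab : a < b) (n : ℤ) (hn : n = ⌊(b - a) / τ⌋)
    (xa xb : ℝ → ℝ)
    (hxa_per : ∀ t, xa (t + τ) = xa t) (hxb_per : ∀ t, xb (t + τ) = xb t)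
    (u₀ : ℝ → ℝ)
    (hu₀ : ∀ t, u₀ t =
      if (t - a) - τ * (⌊(t - a) / τ⌋ : ℝ) < b - a - n * τ then
        (xb t - xa t) / ((n : ℝ) + 2)
      else (xb t - xa t) / ((n : ℝ) + 1))
    (xstar : ℝ → ℝ)
    (hxstar_a : ∀ t, t ≤ a → xstar t = xa t)
    (hxstar_mid : ∀ t, a < t → t < b →
      xstar t = xa t + (1 + (⌊(t - a) / τ⌋ : ℝ)) * u₀ t)
    (hxstar_b : ∀ t, b ≤ t → xstar t = xb t)
    (x : ℝ → ℝ) (hx : Measurable x)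
    (hx_a : ∀ t, t ≤ a → x t = xa t) (hx_b : ∀ t, b ≤ t → x t = xb t) :
    (∫⁻ t in Set.Ioc a (b + τ), ENNReal.ofReal ((xstar t - xstar (t - τ)) ^ 2)) ≤
      ∫⁻ t in Set.Ioc a (b + τ), ENNReal.ofReal ((x t - x (t - τ)) ^ 2) := by
  lift n to ℕ using hn ▸ Int.floor_nonneg.2 (div_nonneg (sub_nonneg.2 hab.le) hτ.le)
  simp only [Int.cast_natCast] at hu₀
  obtain ⟨hlo, hhi⟩ := Int.floor_eq_iff.1 hn.symm
  rw [Int.cast_natCast, le_div_iff₀ hτ] at hlo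
  rw [Int.cast_natCast, div_lt_iff₀ hτ] at hhi
  have hK : b + τ ≤ a + (n + 2 : ℕ) * τ := by
    push_cast
    linarith
  have hmeas : ∀ k ∈ Finset.range (n + 2),
      Measurable fun s => persistenceIntegrand τ x (s + k * τ) := fun k _ =>
    (measurable_persistenceIntegrand hx).comp (measurable_add_const _)
  change persistenceCost τ a (b + τ) xstar ≤ persistenceCost τ a (b + τ) x
  rw [persistenceCost_eq_sum_fibers hτ.le hab.le hK hxb_per hxstar_b,
    persistenceCost_eq_sum_fibers hτ.le hab.le hK hxb_per hx_b, ← lintegral_finsetSum _ hmeas]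
  refine (sum_lintegral_le_lintegral_sum _ _).trans ?_
  rw [setLIntegral_congr Ioo_ae_eq_Ioc.symm, setLIntegral_congr Ioo_ae_eq_Ioc.symm]
  exact setLIntegral_mono' measurableSet_Ioo fun s hs =>
    sum_persistenceIntegrand_fiber_le hτ hlo hhi hxa_per hxb_per hu₀ hxstar_a hxstar_mid
      hxstar_b hx_a hx_b hs

/-- Theorem 2 of the paper: for a raccordation interval `[a, b]` of arbitrary length,
with `n = ⌊(b-a)/τ⌋`, the Gluskabi raccordation `x*` built from the two-level control
`u₀` minimizes the persistence cost `J x = ∫_a^{b+τ} (x t - x (t-τ))² dt` over all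
measurable candidate trajectories agreeing with the τ-periodic `xa` on `(-∞, a]`
and with the τ-periodic `xb` on `[b, ∞)`. -/
theorem gluskabi_raccordation_general_minimizes
    (τ a b : ℝ) (hτ : 0 < τ) (hab : a < b) (n : ℤ) (hn : n = ⌊(b - a) / τ⌋)
    (xa xb : ℝ → ℝ) (hxa : Continuous xa) (hxb : Continuous xb)
    (hxa_per : ∀ t, xa (t + τ) = xa t) (hxb_per : ∀ t, xb (t + τ) = xb t)
    (u₀ : ℝ → ℝ)
    (hu₀ : ∀ t, u₀ t =
      if (t - a) - τ * (⌊(t - a) / τ⌋ : ℝ) < b - a - n * τ then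
        (xb t - xa t) / ((n : ℝ) + 2)
      else (xb t - xa t) / ((n : ℝ) + 1))
    (xstar : ℝ → ℝ)
    (hxstar_a : ∀ t, t ≤ a → xstar t = xa t)
    (hxstar_mid : ∀ t, a < t → t < b →
      xstar t = xa t + (1 + (⌊(t - a) / τ⌋ : ℝ)) * u₀ t)
    (hxstar_b : ∀ t, b ≤ t → xstar t = xb t)
    (x : ℝ → ℝ) (hx : Measurable x)
    (hx_a : ∀ t, t ≤ a → x t = xa t) (hx_b : ∀ t, b ≤ t → x t = xb t) :
    (∫⁻ t in Set.Ioc a (b + τ), ENNReal.ofReal ((xstar t - xstar (t - τ)) ^ 2)) ≤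
      ∫⁻ t in Set.Ioc a (b + τ), ENNReal.ofReal ((x t - x (t - τ)) ^ 2) :=
  gluskabi_raccordation_general_minimizes_general τ a b hτ hab n hn xa xb hxa_per hxb_per u₀ hu₀
    xstar hxstar_a hxstar_mid hxstar_b x hx hx_a hx_b
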